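/- arXiv:1707.09583 — 2 statements merged into one kernel-verified Lean document; each statement's English description precedes it below -/
import Mathlib

section
/- Let p > 1, C₅ > 0, and (D_j) a sequence of positive reals with D_{j+1} ≥ C₅ D_j^p/p^{2j} for all j ≥ 1. If log D₁ > S_p(∞) := Σ_{k=1}^∞ (2k log p − log C₅)/p^k, then D_j → ∞ as j → ∞. -/
/-!
Put `x j = log D_(j+1)` and `c j = 2 (j + 1) log p - log C₅`, so that the recursion reads
`x (j + 1) ≥ p x j - c j`. The tail sums `T j = ∑ₘ c (j + m) / p ^ (m + 1)` satisfy
`p T j = c j + T (j + 1)`, hence `x j - T j` grows at least like `p ^ j (x 0 - T 0)`, and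
`x 0 - T 0 = log D₁ - S_p(∞) > 0`. Since `c` is bounded below, so are the `T j`,
and `x j → ∞`.
-/

open Filter Real

noncomputable def tailSum (p : ℝ) (c : ℕ → ℝ) (j : ℕ) : ℝ :=
  ∑' m : ℕ, c (j + m) / p ^ (m + 1)

section TailSum

variable {p : ℝ} {c : ℕ → ℝ}

lemma summable_tailSum (hp : 0 < p) (hc : Summable fun m => c m / p ^ m) (j : ℕ) :
    Summable fun m => c (j + m) / p ^ (m + 1) := by
  have hshift : Summable fun m => c (m + j) / p ^ (m + j) := (summable_nat_add_iff j).mpr hc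
  refine (hshift.mul_left (p ^ j / p)).congr fun m => ?_
  rw [add_comm m j, pow_add]
  field_simp
  ring

lemma mul_tailSum (hp : 0 < p) (hc : Summable fun m => c m / p ^ m) (j : ℕ) :
    p * tailSum p c j = c j + tailSum p c (j + 1) := by
  have hsum : Summable fun m => c (j + m) / p ^ m :=
    ((summable_tailSum hp hc j).mul_left p).congr fun m => by rw [pow_succ]; field_simp
  calc p * tailSum p c j = ∑' m, c (j + m) / p ^ m := by
        rw [tailSum, ← tsum_mul_left]
        exact tsum_congr fun m => by rw [pow_succ]; field_simp
    _ = c j + tailSum p c (j + 1) := by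
        rw [hsum.tsum_eq_zero_add, tailSum]
        simp only [add_zero, pow_zero, div_one, add_assoc, add_comm 1]

lemma div_sub_one_le_tailSum (hp : 1 < p) (hc : Summable fun m => c m / p ^ m) {b : ℝ}
    (hcb : ∀ j, b ≤ c j) (j : ℕ) : b / (p - 1) ≤ tailSum p c j := by
  have hp0 : 0 < p := one_pos.trans hp
  have hgeom : HasSum (fun m : ℕ => b / p ^ (m + 1)) (b / (p - 1)) := by
    have h := (hasSum_geometric_of_lt_one (inv_nonneg.mpr hp0.le)
      (inv_lt_one_of_one_lt₀ hp)).mul_left (b / p)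
    have hterm : (fun m : ℕ => b / p * p⁻¹ ^ m) = fun m => b / p ^ (m + 1) := by
      funext m; rw [inv_pow, pow_succ]; field_simp
    have hval : b / p * (1 - p⁻¹)⁻¹ = b / (p - 1) := by
      field_simp [(sub_pos.mpr hp).ne']
    rwa [hterm, hval] at h
  rw [← hgeom.tsum_eq]
  exact hgeom.summable.tsum_le_tsum (fun m => by gcongr; exact hcb _) (summable_tailSum hp0 hc j)

lemma pow_mul_le_sub_tailSum (hp : 0 < p) (hc : Summable fun m => c m / p ^ m) {x : ℕ → ℝ}
    (hx : ∀ j, p * x j - c j ≤ x (j + 1)) (n : ℕ) :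
    p ^ n * (x 0 - tailSum p c 0) ≤ x n - tailSum p c n := by
  induction n with
  | zero => simp
  | succ n ih =>
    have hrec := mul_tailSum hp hc n
    calc p ^ (n + 1) * (x 0 - tailSum p c 0) = p * (p ^ n * (x 0 - tailSum p c 0)) := by ring
      _ ≤ p * (x n - tailSum p c n) := by gcongr
      _ ≤ x (n + 1) - tailSum p c (n + 1) := by linarith [hx n]

theorem tendsto_atTop_of_mul_sub_le (hp : 1 < p) (hc : Summable fun m => c m / p ^ m) {b : ℝ}
    (hcb : ∀ j, b ≤ c j) {x : ℕ → ℝ} (hx : ∀ j, p * x j - c j ≤ x (j + 1))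
    (hx0 : tailSum p c 0 < x 0) : Tendsto x atTop atTop := by
  have hgrow : Tendsto (fun n => p ^ n * (x 0 - tailSum p c 0) + b / (p - 1)) atTop atTop :=
    tendsto_atTop_add_const_right _ _
      ((tendsto_pow_atTop_atTop_of_one_lt hp).atTop_mul_const (sub_pos.mpr hx0))
  refine tendsto_atTop_mono (fun n => ?_) hgrow
  linarith [pow_mul_le_sub_tailSum (one_pos.trans hp) hc hx n, div_sub_one_le_tailSum hp hc hcb n]

end TailSum

lemma summable_affine_div_pow {p : ℝ} (hp : 1 < p) (a b : ℝ) :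
    Summable fun m : ℕ => (a + b * m) / p ^ m := by
  have hr : ‖p⁻¹‖ < 1 := by
    rw [norm_inv, Real.norm_of_nonneg (one_pos.trans hp).le]
    exact inv_lt_one_of_one_lt₀ hp
  have hgeom := summable_geometric_of_norm_lt_one hr
  have harith : Summable fun m : ℕ => (m : ℝ) * p⁻¹ ^ m := by
    simpa using summable_pow_mul_geometric_of_norm_lt_one 1 hr
  exact ((hgeom.mul_left a).add (harith.mul_left b)).congr fun m => by
    rw [inv_pow]; field_simp

theorem stmt_13 (p C₅ : ℝ) (hp : 1 < p) (hC : 0 < C₅)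
    (D : ℕ → ℝ) (hDpos : ∀ j, 1 ≤ j → 0 < D j)
    (hrec : ∀ j, 1 ≤ j → D (j + 1) ≥ C₅ * D j ^ p / p ^ (2 * j))
    (hD1 : Real.log (D 1) >
      ∑' k : ℕ, (2 * ((k : ℝ) + 1) * Real.log p - Real.log C₅) / p ^ (k + 1)) :
    Filter.Tendsto D Filter.atTop Filter.atTop := by
  set c : ℕ → ℝ := fun j => 2 * ((j : ℝ) + 1) * log p - log C₅
  have hc : Summable fun m => c m / p ^ m :=
    (summable_affine_div_pow hp (2 * log p - log C₅) (2 * log p)).congr fun m => by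
      simp only [c]; ring
  have hcb : ∀ j, -log C₅ ≤ c j := fun j => by
    have : 0 ≤ 2 * ((j : ℝ) + 1) * log p := by positivity [log_pos hp]
    simp only [c]; linarith
  have hx : ∀ j, p * log (D (j + 1)) - c j ≤ log (D (j + 1 + 1)) := fun j => by
    have hDj := hDpos (j + 1) (Nat.le_add_left 1 j)
    calc p * log (D (j + 1)) - c j = log (C₅ * D (j + 1) ^ p / p ^ (2 * (j + 1))) := by
          rw [log_div (by positivity) (by positivity), log_mul hC.ne' (by positivity),
            log_rpow hDj, log_pow]
          push_cast; ring
      _ ≤ log (D (j + 1 + 1)) := log_le_log (by positivity) (hrec (j + 1) (Nat.le_add_left 1 j))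
  have hx0 : tailSum p c 0 < log (D (0 + 1)) := by
    simpa only [tailSum, zero_add, c] using hD1
  have hlog := tendsto_atTop_of_mul_sub_le hp hc hcb hx hx0
  refine (tendsto_add_atTop_iff_nat 1).mp (tendsto_exp_atTop.comp hlog |>.congr fun n => ?_)
  exact exp_log (hDpos (n + 1) (Nat.le_add_left 1 n))
end

section
/- Let F₁ : [0,∞) → ℝ be continuous with F₁(0) > 0, and suppose for all t ≥ 0: e^{2t} F₁(t) ≥ F₁(0) + c∫₀ᵗ e^{2s} ds + ∫₀ᵗ (e^{2s}/m(s)) ∫₀^s m(r) μ(1+r)^{−β} F₁(r) dr ds, where c ≥ 0, μ > 0, β > 1, and m(t) = exp(μ(1+t)^{1-β}/(1−β)) > 0. Then F₁(t) > 0 for all t ≥ 0. -/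
open Set

-- A counterexample `t` yields, by the intermediate value theorem, a first zero `t₀ ∈ [a, t]`;
-- `f` is nonnegative on `[a, t₀]`, so `h` makes `f t₀` positive.
theorem ContinuousOn.forall_pos_of_nonneg_Icc_imp_pos {f : ℝ → ℝ} {a : ℝ}
    (hf : ContinuousOn f (Ici a)) (ha : 0 < f a)
    (h : ∀ t, a ≤ t → (∀ u ∈ Icc a t, 0 ≤ f u) → 0 < f t) :
    ∀ t, a ≤ t → 0 < f t := by
  intro t hat
  by_contra! ht
  have hcontIcc : ∀ b, ContinuousOn f (Icc a b) := fun b => hf.mono Icc_subset_Ici_self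
  have hzeros : IsCompact (Icc a t ∩ f ⁻¹' {0}) :=
    isCompact_Icc.of_isClosed_subset
      ((hcontIcc t).preimage_isClosed_of_isClosed isClosed_Icc isClosed_singleton)
      inter_subset_left
  obtain ⟨v, hv, hfv⟩ := intermediate_value_Icc' hat (hcontIcc t) ⟨ht, ha.le⟩
  obtain ⟨t₀, ⟨ht₀, hft₀⟩, hmin⟩ := hzeros.exists_isLeast ⟨v, hv, hfv⟩
  refine (h t₀ ht₀.1 fun u hu => ?_).ne' hft₀
  by_contra! hfu
  obtain ⟨w, hw, hfw⟩ := intermediate_value_Icc' hu.1 (hcontIcc u) ⟨hfu.le, ha.le⟩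
  have ht₀w : t₀ ≤ w := hmin ⟨⟨hw.1, hw.2.trans (hu.2.trans ht₀.2)⟩, hfw⟩
  have hut₀ : u = t₀ := le_antisymm hu.2 (ht₀w.trans hw.2)
  exact (hut₀ ▸ hfu).ne hft₀

theorem stmt_19_general (μ β c : ℝ) (hμ : 0 < μ) (hc : 0 ≤ c)
    (m : ℝ → ℝ) (hm : ∀ t, m t = Real.exp (μ * (1 + t) ^ (1 - β) / (1 - β)))
    (F₁ : ℝ → ℝ) (hcont : ContinuousOn F₁ (Set.Ici 0)) (hF₁0 : 0 < F₁ 0)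
    (hineq : ∀ t, 0 ≤ t →
      Real.exp (2 * t) * F₁ t ≥ F₁ 0 + c * (∫ s in (0 : ℝ)..t, Real.exp (2 * s)) +
        ∫ s in (0 : ℝ)..t, (Real.exp (2 * s) / m s) *
          ∫ r in (0 : ℝ)..s, m r * (μ * (1 + r) ^ (-β)) * F₁ r) :
    ∀ t, 0 ≤ t → 0 < F₁ t := by
  refine hcont.forall_pos_of_nonneg_Icc_imp_pos hF₁0 fun t ht hnonneg => ?_
  have hm_pos : ∀ s, 0 < m s := fun s => hm s ▸ Real.exp_pos _
  have hforcing : 0 ≤ c * ∫ s in (0 : ℝ)..t, Real.exp (2 * s) :=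
    mul_nonneg hc (intervalIntegral.integral_nonneg ht fun s _ => (Real.exp_pos _).le)
  have hmemory : 0 ≤ ∫ s in (0 : ℝ)..t, (Real.exp (2 * s) / m s) *
      ∫ r in (0 : ℝ)..s, m r * (μ * (1 + r) ^ (-β)) * F₁ r := by
    refine intervalIntegral.integral_nonneg ht fun s hs => ?_
    refine mul_nonneg (div_pos (Real.exp_pos _) (hm_pos s)).le
      (intervalIntegral.integral_nonneg hs.1 fun r hr => ?_)
    have hweight : 0 ≤ μ * (1 + r) ^ (-β) :=
      mul_nonneg hμ.le (Real.rpow_nonneg (by linarith [hr.1]) _)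
    exact mul_nonneg (mul_nonneg (hm_pos r).le hweight) (hnonneg r ⟨hr.1, hr.2.trans hs.2⟩)
  have hprod : 0 < Real.exp (2 * t) * F₁ t := by linarith [hineq t ht]
  exact pos_of_mul_pos_right hprod (Real.exp_pos _).le

theorem stmt_19 (μ β c : ℝ) (hμ : 0 < μ) (hβ : 1 < β) (hc : 0 ≤ c)
    (m : ℝ → ℝ) (hm : ∀ t, m t = Real.exp (μ * (1 + t) ^ (1 - β) / (1 - β)))
    (F₁ : ℝ → ℝ) (hcont : ContinuousOn F₁ (Set.Ici 0)) (hF₁0 : 0 < F₁ 0)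
    (hineq : ∀ t, 0 ≤ t →
      Real.exp (2 * t) * F₁ t ≥ F₁ 0 + c * (∫ s in (0 : ℝ)..t, Real.exp (2 * s)) +
        ∫ s in (0 : ℝ)..t, (Real.exp (2 * s) / m s) *
          ∫ r in (0 : ℝ)..s, m r * (μ * (1 + r) ^ (-β)) * F₁ r) :
    ∀ t, 0 ≤ t → 0 < F₁ t :=
  stmt_19_general μ β c hμ hc m hm F₁ hcont hF₁0 hineq
end
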